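/- Let N ≥ 1 and C_0 ≥ C_1 ≥ ... ≥ C_{N+1} be reals. With q_N(p) = Σ_{j=0}^{N} (N choose j) p^j (1-p)^{N-j} C_j and q_{N+1}(p) = Σ_{j=0}^{N+1} (N+1 choose j) p^j (1-p)^{N+1-j} C_j, one has q_{N+1}(p) ≤ q_N(p) for all p ∈ [0,1]. -/
import Mathlib


theorem stmt5 (N : ℕ) (hN : 1 ≤ N) (C : ℕ → ℝ)
    (hC : ∀ j, j ≤ N → C (j + 1) ≤ C j)
    (p : ℝ) (hp : p ∈ Set.Icc (0 : ℝ) 1) :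
    ∑ j ∈ Finset.range (N + 2),
        ((N + 1).choose j : ℝ) * p ^ j * (1 - p) ^ (N + 1 - j) * C j
      ≤ ∑ j ∈ Finset.range (N + 1),
          (N.choose j : ℝ) * p ^ j * (1 - p) ^ (N - j) * C j := by
  obtain ⟨hp0, hp1⟩ := hp
  have h1p : (0:ℝ) ≤ 1 - p := by linarith
  set f : ℕ → ℝ := fun j => (N.choose j : ℝ) * p ^ j * (1 - p) ^ (N - j) with hf
  set h : ℕ → ℝ := fun j => (N.choose j : ℝ) * p ^ j * (1 - p) ^ (N + 1 - j) * C j with hh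
  have key : ∑ j ∈ Finset.range (N + 2),
        ((N + 1).choose j : ℝ) * p ^ j * (1 - p) ^ (N + 1 - j) * C j
      = ∑ j ∈ Finset.range (N + 1), f j * (p * C (j + 1) + (1 - p) * C j) := by
    rw [Finset.sum_range_succ' _ (N + 1)]
    have e1 : ∀ j ∈ Finset.range (N + 1),
        ((N + 1).choose (j+1) : ℝ) * p ^ (j+1) * (1 - p) ^ (N + 1 - (j+1)) * C (j+1)
          = f j * (p * C (j + 1)) + h (j+1) := by
      intro j hj
      have : N + 1 - (j + 1) = N - j := by omega
      rw [this, Nat.choose_succ_succ]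
      have : N + 1 - (j + 1) = N - j := by omega
      simp only [hf, hh, this]
      push_cast
      ring
    rw [Finset.sum_congr rfl e1, Finset.sum_add_distrib]
    have e2 : ∑ j ∈ Finset.range (N + 1), h (j + 1)
        + ((N + 1).choose 0 : ℝ) * p ^ 0 * (1 - p) ^ (N + 1 - 0) * C 0
        = ∑ j ∈ Finset.range (N + 1), f j * ((1 - p) * C j) := by
      have h0 : ((N + 1).choose 0 : ℝ) * p ^ 0 * (1 - p) ^ (N + 1 - 0) * C 0 = h 0 := by
        simp [hh]
      rw [h0, ← Finset.sum_range_succ' h (N + 1), Finset.sum_range_succ]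
      have hz : h (N + 1) = 0 := by
        simp [hh, Nat.choose_eq_zero_of_lt (by omega : N < N + 1)]
      rw [hz, add_zero]
      refine Finset.sum_congr rfl fun j hj => ?_
      have hjN : j ≤ N := by
        simpa [Nat.lt_succ_iff] using Finset.mem_range.mp hj
      have : N + 1 - j = (N - j) + 1 := by omega
      simp only [hh, hf, this, pow_succ]
      ring
    rw [add_assoc, e2, ← Finset.sum_add_distrib]
    refine Finset.sum_congr rfl fun j hj => ?_
    ring
  rw [key]
  refine Finset.sum_le_sum fun j hj => ?_
  have hjN : j ≤ N := by
    simpa [Nat.lt_succ_iff] using Finset.mem_range.mp hj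
  have hfnn : 0 ≤ f j := by
    have := Nat.cast_nonneg (α := ℝ) (N.choose j)
    positivity
  have hCj : C (j + 1) ≤ C j := hC j hjN
  have : p * C (j + 1) + (1 - p) * C j ≤ C j := by nlinarith
  calc f j * (p * C (j + 1) + (1 - p) * C j) ≤ f j * C j := by
        exact mul_le_mul_of_nonneg_left this hfnn
    _ = (N.choose j : ℝ) * p ^ j * (1 - p) ^ (N - j) * C j := rfl
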